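/- (Proposition: equivariant normalization.) For every R ∈ O(n) and every input X ∈ ℝ^{n+2} with B·X ≠ 0, the normalized output of the equivariant hypersphere is O(n)-equivariant: V · ((B·X)/‖B·X‖) = (B·(D₂(R)·X))/‖B·(D₂(R)·X)‖, where V = M_nᵀ · D(R_O · R · R_Oᵀ) · M_n and ‖·‖ denotes the Euclidean norm on ℝ^{n+1}. -/

import Mathlib

/-- κ = −(1+√(n+1))/n^{3/2} -/
noncomputable def simplexKappa (n : ℕ) : ℝ :=
  -(1 + Real.sqrt (n + 1)) / (n : ℝ) ^ ((3 : ℝ) / 2)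

/-- μ = √(1 + 1/n) -/
noncomputable def simplexMu (n : ℕ) : ℝ := Real.sqrt (1 + 1 / n)

/-- The vertices p_1, …, p_{n+1} ∈ ℝ^n of the regular n-simplex (0-indexed by `Fin (n+1)`):
`p_1 = n^{-1/2}·𝟙` and `p_i = κ·𝟙 + μ·e_{i-1}` for `2 ≤ i ≤ n+1`. -/
noncomputable def simplexVertex (n : ℕ) (i : Fin (n + 1)) : EuclideanSpace ℝ (Fin n) :=
  WithLp.toLp 2 fun j =>
    if (i : ℕ) = 0 then (n : ℝ) ^ (-(1 : ℝ) / 2)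
    else simplexKappa n + (if (j : ℕ) = (i : ℕ) - 1 then simplexMu n else 0)

open Matrix

/-- The (n+1)×(n+1) change-of-basis matrix M_n whose i-th column is
m_i = (1/p)·(p_i, n^{-1/2}) with p = √(1 + 1/n). -/
noncomputable def simplexM (n : ℕ) : Matrix (Fin (n + 1)) (Fin (n + 1)) ℝ :=
  Matrix.of fun j i =>
    (Real.sqrt (1 + 1 / n))⁻¹ *
      (if h : (j : ℕ) < n then simplexVertex n i ⟨j, h⟩ else (n : ℝ) ^ (-(1 : ℝ) / 2))
/-- D(A): the (n+1)×(n+1) block-diagonal matrix diag(A, 1), appending a 1 to the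
diagonal of the n×n matrix A. -/
def blockDiag1 (n : ℕ) (A : Matrix (Fin n) (Fin n) ℝ) :
    Matrix (Fin (n + 1)) (Fin (n + 1)) ℝ :=
  Matrix.of fun i j =>
    if hi : (i : ℕ) < n then (if hj : (j : ℕ) < n then A ⟨i, hi⟩ ⟨j, hj⟩ else 0)
    else (if (i : ℕ) = (j : ℕ) then 1 else 0)
/-- D₂(A): the (n+2)×(n+2) block-diagonal matrix diag(A, 1, 1), appending two 1s to
the diagonal of the n×n matrix A. -/
def blockDiag2 (n : ℕ) (A : Matrix (Fin n) (Fin n) ℝ) :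
    Matrix (Fin (n + 2)) (Fin (n + 2)) ℝ :=
  Matrix.of fun i j =>
    if hi : (i : ℕ) < n then (if hj : (j : ℕ) < n then A ⟨i, hi⟩ ⟨j, hj⟩ else 0)
    else (if (i : ℕ) = (j : ℕ) then 1 else 0)

/-- The filter-bank matrix B of the equivariant hypersphere: the (n+1)×(n+2) matrix
whose i-th row is ((R_Oᵀ · T_i · R_O)·c₀, s₁, s₂) ∈ ℝ^{n+2}. -/
noncomputable def filterBank (n : ℕ) (c₀ : EuclideanSpace ℝ (Fin n)) (s₁ s₂ : ℝ)
    (RO : Matrix (Fin n) (Fin n) ℝ) (T : Fin (n + 1) → Matrix (Fin n) (Fin n) ℝ) :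
    Matrix (Fin (n + 1)) (Fin (n + 2)) ℝ :=
  Matrix.of fun i j =>
    if h : (j : ℕ) < n then ((ROᵀ * T i * RO).mulVec c₀) ⟨j, h⟩
    else if (j : ℕ) = n then s₁ else s₂

/-!
Since `T_i R_O c₀ = ‖c₀‖ p_i`, the `i`-th row of `B` is `(‖c₀‖ R_Oᵀ p_i, s₁, s₂)`, so `B = Mᵀ G`
with `G = diag(μ ‖c₀‖ R_O, μ √n [s₁ s₂])` block diagonal. The columns of `M` are orthonormal,
because the simplex vertices are unit vectors with pairwise inner products `-1/n`. Hence
`V B = Mᵀ D(R_O R R_Oᵀ) M Mᵀ G = Mᵀ D(R_O R R_Oᵀ) G = Mᵀ G D₂(R) = B D₂(R)`, and `V`, a product of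
orthogonal matrices, preserves norms, so it commutes with normalization.
-/

lemma rpow_neg_half_eq_inv_sqrt {x : ℝ} (hx : 0 ≤ x) : x ^ (-(1 : ℝ) / 2) = (√x)⁻¹ := by
  rw [Real.sqrt_eq_rpow, ← Real.rpow_neg hx]
  norm_num

lemma norm_mulVec_of_mem_orthogonalGroup {ι : Type*} [Fintype ι] [DecidableEq ι]
    {U : Matrix ι ι ℝ} (hU : U ∈ orthogonalGroup ι ℝ) (v : ι → ℝ) :
    ‖(EuclideanSpace.equiv ι ℝ).symm (U *ᵥ v)‖ = ‖(EuclideanSpace.equiv ι ℝ).symm v‖ := by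
  simpa using ContinuousLinearMap.norm_map_of_mem_unitary
    (Unitary.map_mem (toEuclideanCLM (𝕜 := ℝ)) hU) (WithLp.toLp 2 v)

lemma mulVec_inv_norm_smul_of_mul_eq {ι κ : Type*} [Fintype ι] [DecidableEq ι] [Fintype κ]
    {U : Matrix ι ι ℝ} (hU : U ∈ orthogonalGroup ι ℝ) {B : Matrix ι κ ℝ} {D : Matrix κ κ ℝ}
    (h : U * B = B * D) (X : κ → ℝ) :
    U *ᵥ (‖(EuclideanSpace.equiv ι ℝ).symm (B *ᵥ X)‖⁻¹ • B *ᵥ X) =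
      ‖(EuclideanSpace.equiv ι ℝ).symm (B *ᵥ (D *ᵥ X))‖⁻¹ • B *ᵥ (D *ᵥ X) := by
  have hUB : U *ᵥ (B *ᵥ X) = B *ᵥ (D *ᵥ X) := by rw [mulVec_mulVec, mulVec_mulVec, h]
  rw [mulVec_smul, ← hUB, norm_mulVec_of_mem_orthogonalGroup hU]

lemma reindex_mul_reindex {α l m o l' m' o' : Type*} [NonUnitalNonAssocSemiring α] [Fintype m]
    [Fintype m'] (e₁ : l ≃ l') (e₂ : m ≃ m') (e₃ : o ≃ o') (A : Matrix l m α) (B : Matrix m o α) :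
    reindex e₁ e₂ A * reindex e₂ e₃ B = reindex e₁ e₃ (A * B) := by
  simp only [reindex_apply, submatrix_mul_equiv]

lemma simplexVertex_zero (n : ℕ) (j : Fin n) : simplexVertex n 0 j = (√n)⁻¹ := by
  simp [simplexVertex, rpow_neg_half_eq_inv_sqrt]

lemma simplexVertex_succ (n : ℕ) (i j : Fin n) :
    simplexVertex n i.succ j = simplexKappa n + if j = i then simplexMu n else 0 := by
  simp [simplexVertex, Fin.val_inj]

lemma simplexMu_pos (n : ℕ) : 0 < simplexMu n :=
  Real.sqrt_pos.mpr (by positivity)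

lemma simplexMu_sq (n : ℕ) : simplexMu n ^ 2 = 1 + 1 / n :=
  Real.sq_sqrt (by positivity)

lemma mul_simplexKappa_add_simplexMu {n : ℕ} (hn : 1 ≤ n) :
    n * simplexKappa n + simplexMu n = -(√n)⁻¹ := by
  have hn0 : (0 : ℝ) < n := by exact_mod_cast hn
  rw [simplexKappa, simplexMu, show (3 : ℝ) / 2 = 1 + 1 / 2 by norm_num, Real.rpow_add hn0,
    Real.rpow_one, ← Real.sqrt_eq_rpow, show (1 : ℝ) + 1 / n = (n + 1) / n by field_simp,
    Real.sqrt_div (by positivity)]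
  field_simp
  ring

lemma sum_simplexVertex_mul {n : ℕ} (hn : 1 ≤ n) (i k : Fin (n + 1)) :
    ∑ j, simplexVertex n i j * simplexVertex n k j = if i = k then 1 else -1 / (n : ℝ) := by
  have hn0 : (n : ℝ) ≠ 0 := by positivity
  set a := (√n)⁻¹
  set κ := simplexKappa n
  set μ := simplexMu n
  have ha : a ^ 2 = 1 / n := by rw [inv_pow, Real.sq_sqrt (Nat.cast_nonneg n), one_div]
  have hμ : μ ^ 2 = 1 + 1 / n := simplexMu_sq n
  have hκμ : n * κ + μ = -a := mul_simplexKappa_add_simplexMu hn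
  have hκ : n * κ ^ 2 + 2 * κ * μ = -1 / n :=
    eq_div_of_mul_eq hn0 (by linear_combination (n * κ + μ - a) * hκμ + ha - hμ)
  induction i using Fin.cases <;> induction k using Fin.cases <;>
    simp only [simplexVertex_zero, simplexVertex_succ, mul_add, add_mul, Finset.sum_add_distrib,
      Finset.sum_const, Finset.card_univ, Fintype.card_fin, nsmul_eq_mul, mul_ite, ite_mul,
      mul_zero, zero_mul, Finset.sum_ite_eq', Finset.mem_univ, if_true,
      Fin.succ_inj, Fin.succ_ne_zero, (Fin.succ_ne_zero _).symm, if_false]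
  · rw [← sq, ha, mul_one_div_cancel hn0]
  · linear_combination a * hκμ - ha
  · linear_combination a * hκμ - ha
  · rename_i i k
    obtain rfl | hik := eq_or_ne i k
    · simp only [if_true]
      linear_combination hκ + hμ
    · simp only [hik, hik.symm, if_false, add_zero]
      linear_combination hκ

lemma simplexM_castSucc (n : ℕ) (j : Fin n) (i : Fin (n + 1)) :
    simplexM n j.castSucc i = (simplexMu n)⁻¹ * simplexVertex n i j := by
  simp [simplexM, simplexMu]

lemma simplexM_last (n : ℕ) (i : Fin (n + 1)) :
    simplexM n (Fin.last n) i = (simplexMu n)⁻¹ * (√n)⁻¹ := by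
  simp [simplexM, simplexMu, rpow_neg_half_eq_inv_sqrt]

lemma simplexM_mem_orthogonalGroup {n : ℕ} (hn : 1 ≤ n) :
    simplexM n ∈ orthogonalGroup (Fin (n + 1)) ℝ := by
  rw [mem_orthogonalGroup_iff']
  ext i k
  have hsum : ∑ j, simplexM n j i * simplexM n j k =
      (simplexMu n ^ 2)⁻¹ * ((if i = k then 1 else -1 / (n : ℝ)) + 1 / n) := by
    rw [Fin.sum_univ_castSucc, ← sum_simplexVertex_mul hn, ← one_div,
      ← Real.sq_sqrt (Nat.cast_nonneg n), one_div, ← inv_pow]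
    simp only [simplexM_castSucc, simplexM_last, mul_add, Finset.mul_sum]
    ring_nf
  rw [mul_apply]
  simp only [transpose_apply, hsum, one_apply]
  split_ifs
  · rw [simplexMu_sq]; field_simp
  · ring

lemma of_blockDiag_eq_reindex_fromBlocks {α : Type*} [Zero α] [One α] (n k : ℕ)
    (A : Matrix (Fin n) (Fin n) α) :
    (Matrix.of fun i j : Fin (n + k) =>
      if hi : (i : ℕ) < n then (if hj : (j : ℕ) < n then A ⟨i, hi⟩ ⟨j, hj⟩ else 0)
      else (if (i : ℕ) = (j : ℕ) then 1 else 0)) =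
      reindex finSumFinEquiv finSumFinEquiv (fromBlocks A 0 0 (1 : Matrix (Fin k) (Fin k) α)) := by
  ext i j
  refine Fin.addCases (fun i => ?_) (fun i => ?_) i <;>
    refine Fin.addCases (fun j => ?_) (fun j => ?_) j <;>
    simp [Matrix.one_apply, Fin.ext_iff]
  omega

lemma blockDiag1_eq_reindex (n : ℕ) (A : Matrix (Fin n) (Fin n) ℝ) :
    blockDiag1 n A =
      reindex finSumFinEquiv finSumFinEquiv (fromBlocks A 0 0 (1 : Matrix (Fin 1) (Fin 1) ℝ)) :=
  of_blockDiag_eq_reindex_fromBlocks n 1 A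

lemma blockDiag2_eq_reindex (n : ℕ) (A : Matrix (Fin n) (Fin n) ℝ) :
    blockDiag2 n A =
      reindex finSumFinEquiv finSumFinEquiv (fromBlocks A 0 0 (1 : Matrix (Fin 2) (Fin 2) ℝ)) :=
  of_blockDiag_eq_reindex_fromBlocks n 2 A

lemma blockDiag1_mem_orthogonalGroup {n : ℕ} {A : Matrix (Fin n) (Fin n) ℝ}
    (hA : A ∈ orthogonalGroup (Fin n) ℝ) : blockDiag1 n A ∈ orthogonalGroup (Fin (n + 1)) ℝ := by
  rw [mem_orthogonalGroup_iff] at hA ⊢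
  rw [blockDiag1_eq_reindex, transpose_reindex, reindex_mul_reindex, fromBlocks_transpose,
    fromBlocks_multiply, hA]
  simp

noncomputable def filterBankFactor (n : ℕ) (c₀ : EuclideanSpace ℝ (Fin n)) (s₁ s₂ : ℝ)
    (RO : Matrix (Fin n) (Fin n) ℝ) : Matrix (Fin (n + 1)) (Fin (n + 2)) ℝ :=
  reindex finSumFinEquiv finSumFinEquiv
    (fromBlocks ((simplexMu n * ‖c₀‖) • RO) 0 0 ((simplexMu n * √n) • !![s₁, s₂]))

lemma filterBank_eq_transpose_mul {n : ℕ} (hn : 1 ≤ n) (c₀ : EuclideanSpace ℝ (Fin n))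
    (s₁ s₂ : ℝ) (RO : Matrix (Fin n) (Fin n) ℝ) (T : Fin (n + 1) → Matrix (Fin n) (Fin n) ℝ)
    (hTc : ∀ i, T i *ᵥ (RO *ᵥ c₀) = ‖c₀‖ • simplexVertex n i) :
    filterBank n c₀ s₁ s₂ RO T = (simplexM n)ᵀ * filterBankFactor n c₀ s₁ s₂ RO := by
  have hμ : simplexMu n ≠ 0 := (simplexMu_pos n).ne'
  ext i j
  rw [mul_apply, Fin.sum_univ_castSucc]
  refine Fin.addCases (fun j => ?_) (fun j => ?_) j
  · have hrow : (ROᵀ * T i * RO) *ᵥ c₀ = ‖c₀‖ • (ROᵀ *ᵥ simplexVertex n i) := by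
      rw [← mulVec_mulVec, ← mulVec_mulVec, hTc i, mulVec_smul]
    simp only [filterBank, of_apply, Fin.val_castAdd, Fin.is_lt, dif_pos, hrow]
    simp only [filterBankFactor, Fin.eta, Pi.smul_apply, mulVec, dotProduct, transpose_apply,
      smul_eq_mul, Finset.mul_sum, simplexM_castSucc, simplexM_last, reindex_apply, submatrix_apply,
      finSumFinEquiv_symm_apply_castSucc, finSumFinEquiv_symm_apply_castAdd,
      finSumFinEquiv_symm_last, fromBlocks_apply₁₁, fromBlocks_apply₂₁, Matrix.smul_apply,
      Matrix.zero_apply, mul_zero, add_zero]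
    exact Finset.sum_congr rfl fun k _ => by field_simp
  · fin_cases j <;> simp [filterBank, filterBankFactor, simplexM_castSucc, simplexM_last] <;>
      field_simp

lemma blockDiag1_mul_filterBankFactor {n : ℕ} (c₀ : EuclideanSpace ℝ (Fin n)) (s₁ s₂ : ℝ)
    {RO : Matrix (Fin n) (Fin n) ℝ} (hRO : ROᵀ * RO = 1) (R : Matrix (Fin n) (Fin n) ℝ) :
    blockDiag1 n (RO * R * ROᵀ) * filterBankFactor n c₀ s₁ s₂ RO =
      filterBankFactor n c₀ s₁ s₂ RO * blockDiag2 n R := by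
  rw [blockDiag1_eq_reindex, blockDiag2_eq_reindex, filterBankFactor, reindex_mul_reindex,
    reindex_mul_reindex, fromBlocks_multiply, fromBlocks_multiply]
  simp [Matrix.mul_assoc, hRO]

theorem equivariant_normalization_general (n : ℕ) (hn : 1 ≤ n)
    (c₀ : EuclideanSpace ℝ (Fin n)) (s₁ s₂ : ℝ)
    (RO : Matrix (Fin n) (Fin n) ℝ) (hRO : ROᵀ * RO = 1)
    (T : Fin (n + 1) → Matrix (Fin n) (Fin n) ℝ)
    (hTc : ∀ i, (T i).mulVec (RO.mulVec c₀) = ‖c₀‖ • simplexVertex n i)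
    (R : Matrix (Fin n) (Fin n) ℝ) (hR : Rᵀ * R = 1)
    (X : Fin (n + 2) → ℝ) :
    ((simplexM n)ᵀ * blockDiag1 n (RO * R * ROᵀ) * simplexM n).mulVec
        (‖(EuclideanSpace.equiv (Fin (n + 1)) ℝ).symm
            ((filterBank n c₀ s₁ s₂ RO T).mulVec X)‖⁻¹ •
          (filterBank n c₀ s₁ s₂ RO T).mulVec X) =
      ‖(EuclideanSpace.equiv (Fin (n + 1)) ℝ).symm
          ((filterBank n c₀ s₁ s₂ RO T).mulVec ((blockDiag2 n R).mulVec X))‖⁻¹ •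
        (filterBank n c₀ s₁ s₂ RO T).mulVec ((blockDiag2 n R).mulVec X) := by
  set M := simplexM n
  set Q := RO * R * ROᵀ
  have hM : M ∈ orthogonalGroup (Fin (n + 1)) ℝ := simplexM_mem_orthogonalGroup hn
  have hMMt : M * Mᵀ = 1 := (mem_orthogonalGroup_iff _ _).mp hM
  have hRO' : RO ∈ orthogonalGroup (Fin n) ℝ := (mem_orthogonalGroup_iff' _ _).mpr hRO
  have hQ : Q ∈ orthogonalGroup (Fin n) ℝ :=
    mul_mem (mul_mem hRO' ((mem_orthogonalGroup_iff' _ _).mpr hR))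
      (transpose_mem_unitaryGroup_iff.mpr hRO')
  have hV : Mᵀ * blockDiag1 n Q * M ∈ orthogonalGroup (Fin (n + 1)) ℝ :=
    mul_mem (mul_mem (transpose_mem_unitaryGroup_iff.mpr hM)
      (blockDiag1_mem_orthogonalGroup hQ)) hM
  refine mulVec_inv_norm_smul_of_mul_eq hV ?_ X
  rw [filterBank_eq_transpose_mul hn c₀ s₁ s₂ RO T hTc]
  calc Mᵀ * blockDiag1 n Q * M * (Mᵀ * filterBankFactor n c₀ s₁ s₂ RO)
      = Mᵀ * (blockDiag1 n Q * filterBankFactor n c₀ s₁ s₂ RO) := by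
        simp only [Matrix.mul_assoc, ← Matrix.mul_assoc M, hMMt, Matrix.one_mul]
    _ = Mᵀ * filterBankFactor n c₀ s₁ s₂ RO * blockDiag2 n R := by
        rw [blockDiag1_mul_filterBankFactor c₀ s₁ s₂ hRO, Matrix.mul_assoc]

/-- (Proposition: equivariant normalization.) For every R ∈ O(n) and every input
X ∈ ℝ^{n+2} with B·X ≠ 0: V · ((B·X)/‖B·X‖) = (B·(D₂(R)·X))/‖B·(D₂(R)·X)‖, where
V = M_nᵀ · D(R_O · R · R_Oᵀ) · M_n and ‖·‖ is the Euclidean norm on ℝ^{n+1}. -/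
theorem equivariant_normalization (n : ℕ) (hn : 1 ≤ n)
    (c₀ : EuclideanSpace ℝ (Fin n)) (s₁ s₂ : ℝ)
    (RO : Matrix (Fin n) (Fin n) ℝ) (hRO : ROᵀ * RO = 1)
    (T : Fin (n + 1) → Matrix (Fin n) (Fin n) ℝ) (hT : ∀ i, (T i)ᵀ * T i = 1)
    (hTc : ∀ i, (T i).mulVec (RO.mulVec c₀) = ‖c₀‖ • simplexVertex n i)
    (R : Matrix (Fin n) (Fin n) ℝ) (hR : Rᵀ * R = 1)
    (X : Fin (n + 2) → ℝ) (hX : (filterBank n c₀ s₁ s₂ RO T).mulVec X ≠ 0) :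
    ((simplexM n)ᵀ * blockDiag1 n (RO * R * ROᵀ) * simplexM n).mulVec
        (‖(EuclideanSpace.equiv (Fin (n + 1)) ℝ).symm
            ((filterBank n c₀ s₁ s₂ RO T).mulVec X)‖⁻¹ •
          (filterBank n c₀ s₁ s₂ RO T).mulVec X) =
      ‖(EuclideanSpace.equiv (Fin (n + 1)) ℝ).symm
          ((filterBank n c₀ s₁ s₂ RO T).mulVec ((blockDiag2 n R).mulVec X))‖⁻¹ •
        (filterBank n c₀ s₁ s₂ RO T).mulVec ((blockDiag2 n R).mulVec X) :=
  equivariant_normalization_general n hn c₀ s₁ s₂ RO hRO T hTc R hR X
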